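/- arXiv:2306.17467 — 7 statements merged into one kernel-verified Lean document; each statement's English description precedes it below -/
import Mathlib

section
/- In the convex cone T of transactions (polynomials α ∈ ℝ[y] with α(0) ≤ 0 and α(k) ≥ 0 for k ≥ 1), the extremal rays are exactly the rays Δ_i, where Δ_0 is the ray generated by the constant polynomial −1 and, for i ≥ 1, Δ_i is the ray generated by y^i. -/
/-- The ray generated by a vector. -/
def Ray {V : Type*} [AddCommGroup V] [Module ℝ V] (α : V) : Set V :=
  {β | ∃ r : ℝ, 0 ≤ r ∧ β = r • α}

/-- `R` is an extremal ray of the convex cone `C`. -/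
def IsExtremalRay {V : Type*} [AddCommGroup V] [Module ℝ V] (C R : Set V) : Prop :=
  (∃ α : V, α ≠ 0 ∧ R = Ray α) ∧
  R \ {0} ⊆ C ∧
  ∀ β γ : V, β ∈ C → β ≠ 0 → γ ∈ C → γ ≠ 0 → β + γ ∈ R → β + γ ≠ 0 →
    ∃ s : ℝ, γ = s • β

/-- The set of transactions. -/
def Transaction (α : Polynomial ℝ) : Prop :=
  α.coeff 0 ≤ 0 ∧ ∀ k ≥ 1, 0 ≤ α.coeff k

open Polynomial

lemma ray_smul {V : Type*} [AddCommGroup V] [Module ℝ V] {t : ℝ} (ht : 0 < t) (v : V) :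
    Ray (t • v) = Ray v := by
  ext β
  constructor
  · rintro ⟨r, hr, rfl⟩
    exact ⟨r * t, mul_nonneg hr ht.le, by rw [mul_smul]⟩
  · rintro ⟨r, hr, rfl⟩
    exact ⟨r / t, div_nonneg hr ht.le, by rw [smul_smul, div_mul_cancel₀ _ ht.ne']⟩

lemma eq_smul_X_pow {p : Polynomial ℝ} {i : ℕ} (h : ∀ m, m ≠ i → p.coeff m = 0) :
    p = p.coeff i • Polynomial.X ^ i := by
  ext m
  rw [Polynomial.coeff_smul, Polynomial.coeff_X_pow, smul_eq_mul]
  by_cases hm : m = i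
  · subst hm; simp
  · rw [h m hm, if_neg hm, mul_zero]

lemma extremal_mono (i : ℕ) (c : ℝ) (hc : c ≠ 0) (h0 : i = 0 → c ≤ 0) (h1 : 1 ≤ i → 0 ≤ c) :
    IsExtremalRay {α : Polynomial ℝ | Transaction α} (Ray (c • Polynomial.X ^ i)) := by
  refine ⟨⟨c • X ^ i, smul_ne_zero hc (pow_ne_zero _ X_ne_zero), rfl⟩, ?_, ?_⟩
  · rintro p ⟨⟨r, hr, rfl⟩, -⟩
    have hco : ∀ m, (r • c • (X : Polynomial ℝ) ^ i).coeff m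
        = r * c * (if m = i then 1 else 0) := by
      intro m
      rw [Polynomial.coeff_smul, Polynomial.coeff_smul, Polynomial.coeff_X_pow, smul_eq_mul,
        smul_eq_mul]
      ring
    constructor
    · rw [hco 0]
      split_ifs with h
      · rw [mul_one]
        exact mul_nonpos_of_nonneg_of_nonpos hr (h0 h.symm)
      · simp
    · intro k hk
      rw [hco k]
      split_ifs with h
      · rw [mul_one]
        exact mul_nonneg hr (h1 (h ▸ hk))
      · simp
  · rintro β γ hβT hβ0 hγT hγ0 ⟨r, hr, hsum⟩ hne
    -- all coefficients of β and γ vanish away from i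
    have hzero : ∀ m, m ≠ i → β.coeff m = 0 ∧ γ.coeff m = 0 := by
      intro m hm
      have hsm : β.coeff m + γ.coeff m = 0 := by
        have := congrArg (fun p => Polynomial.coeff p m) hsum
        simpa [Polynomial.coeff_smul, Polynomial.coeff_X_pow, hm] using this
      rcases Nat.eq_zero_or_pos m with hm0 | hm1
      · subst hm0
        have hβ := hβT.1
        have hγ := hγT.1
        constructor <;> linarith
      · have hβ := hβT.2 m hm1
        have hγ := hγT.2 m hm1
        constructor <;> linarith
    have hβrep : β = β.coeff i • X ^ i := eq_smul_X_pow fun m hm => (hzero m hm).1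
    have hγrep : γ = γ.coeff i • X ^ i := eq_smul_X_pow fun m hm => (hzero m hm).2
    have hβi : β.coeff i ≠ 0 := by
      intro h
      apply hβ0
      rw [hβrep, h, zero_smul]
    refine ⟨γ.coeff i / β.coeff i, ?_⟩
    rw [hγrep, hβrep, smul_smul]
    simp [Polynomial.coeff_smul, Polynomial.coeff_X_pow, div_mul_cancel₀ _ hβi]

theorem extremal_rays_of_transactions (R : Set (Polynomial ℝ)) :
    IsExtremalRay {α : Polynomial ℝ | Transaction α} R ↔
      (R = Ray (-1 : Polynomial ℝ) ∨ ∃ i : ℕ, 1 ≤ i ∧ R = Ray ((Polynomial.X : Polynomial ℝ) ^ i)) := by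
  constructor
  · rintro ⟨⟨α, hα, rfl⟩, hsub, hext⟩
    have hαmem : α ∈ Ray α := ⟨1, zero_le_one, (one_smul _ _).symm⟩
    have hαT : Transaction α := hsub ⟨hαmem, by simpa using hα⟩
    obtain ⟨i, hi⟩ : ∃ i, α.coeff i ≠ 0 := by
      by_contra h
      push_neg at h
      exact hα (Polynomial.ext fun n => by simp [h n])
    have hone : ∀ m, m ≠ i → α.coeff m = 0 := by
      intro j hj
      by_contra hjne
      set β := Polynomial.monomial i (α.coeff i) with hβdef
      set γ := α - β with hγdef
      have hβc : ∀ m, β.coeff m = if i = m then α.coeff i else 0 := fun m =>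
        Polynomial.coeff_monomial
      have hγc : ∀ m, γ.coeff m = α.coeff m - (if i = m then α.coeff i else 0) := by
        intro m
        rw [hγdef, Polynomial.coeff_sub, hβc]
      have hβT : Transaction β := by
        constructor
        · rw [hβc]
          split_ifs with h
          · rw [h]; exact hαT.1
          · exact le_rfl
        · intro k hk
          rw [hβc]
          split_ifs with h
          · rw [h]; exact hαT.2 k hk
          · exact le_rfl
      have hγT : Transaction γ := by
        constructor
        · rw [hγc]
          split_ifs with h
          · rw [h]; simp
          · simpa using hαT.1
        · intro k hk
          rw [hγc]
          split_ifs with h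
          · rw [h]; simp
          · simpa using hαT.2 k hk
      have hβ0 : β ≠ 0 := by
        intro h
        apply hi
        have := congrArg (fun p => Polynomial.coeff p i) h
        simpa [hβc i] using this
      have hγ0 : γ ≠ 0 := by
        intro h
        apply hjne
        have := congrArg (fun p => Polynomial.coeff p j) h
        simpa [hγc j, Ne.symm hj] using this
      have hsum : β + γ = α := by rw [hγdef]; ring
      obtain ⟨s, hs⟩ := hext β γ hβT hβ0 hγT hγ0 (by rw [hsum]; exact hαmem)
        (by rw [hsum]; exact hα)
      apply hjne
      have := congrArg (fun p => Polynomial.coeff p j) hs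
      simp only [hγc j, Polynomial.coeff_smul, hβc j, if_neg (Ne.symm hj), smul_eq_mul,
        mul_zero, sub_zero] at this
      exact this
    have hrep : α = α.coeff i • X ^ i := eq_smul_X_pow hone
    rcases Nat.eq_zero_or_pos i with hi0 | hi1
    · left
      subst hi0
      have hc : α.coeff 0 < 0 := lt_of_le_of_ne hαT.1 hi
      have : α.coeff 0 • (X ^ 0 : Polynomial ℝ) = (-(α.coeff 0)) • (-1 : Polynomial ℝ) := by
        simp
      rw [hrep, this, ray_smul (by linarith) _]
    · right
      have hc : 0 < α.coeff i := lt_of_le_of_ne (hαT.2 i hi1) (Ne.symm hi)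
      exact ⟨i, hi1, by rw [hrep, ray_smul hc _]⟩
  · rintro (rfl | ⟨i, hi1, rfl⟩)
    · have h := extremal_mono 0 (-1) (by norm_num) (fun _ => by norm_num) (by omega)
      have : (-1 : ℝ) • (X ^ 0 : Polynomial ℝ) = -1 := by simp
      rwa [this] at h
    · have h := extremal_mono i 1 one_ne_zero (by omega) (fun _ => zero_le_one)
      rwa [one_smul] at h
end

section
/- For x > 0 and n ≥ 1, the set E(x,n) of elementary loans of maturity n with simple interest rate x equals {c·(−1 + (1+nx)·y^n) : c > 0}, and its linear span contains no arbitrage: if α lies in the span and α(0) = 0 then α = 0. -/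
/-- Elementary loans of maturity `n` with simple interest rate `x`. -/
def ElemLoansRate (x : ℝ) (n : ℕ) : Set (Polynomial ℝ) :=
  {α | α.coeff 0 < 0 ∧ 0 < α.coeff n ∧ (∀ k : ℕ, k ≠ 0 → k ≠ n → α.coeff k = 0) ∧
    α.coeff n + α.coeff 0 * (1 + n * x) = 0}

theorem elem_loans_rate_eq_ray_and_span_no_arbitrage
    (x : ℝ) (n : ℕ) (hx : 0 < x) (hn : 1 ≤ n) :
    ElemLoansRate x n =
      {α : Polynomial ℝ | ∃ c : ℝ, 0 < c ∧
        α = c • (Polynomial.C (1 + n * x) * Polynomial.X ^ n - 1)} ∧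
    ∀ α ∈ Submodule.span ℝ (ElemLoansRate x n), α.coeff 0 = 0 → α = 0 := by
  have hn0 : n ≠ 0 := by omega
  have hpos : (0:ℝ) < 1 + n * x := by positivity
  set p : Polynomial ℝ := Polynomial.C (1 + n * x) * Polynomial.X ^ n - 1 with hp
  have hp0 : p.coeff 0 = -1 := by
    simp only [hp, Polynomial.coeff_sub, Polynomial.coeff_C_mul, Polynomial.coeff_X_pow,
      Polynomial.coeff_one]
    simp [Ne.symm hn0]
  have hpn : p.coeff n = 1 + n * x := by
    simp only [hp, Polynomial.coeff_sub, Polynomial.coeff_C_mul, Polynomial.coeff_X_pow,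
      Polynomial.coeff_one]
    simp [hn0, Ne.symm hn0]
  have hpk : ∀ k : ℕ, k ≠ 0 → k ≠ n → p.coeff k = 0 := by
    intro k hk0 hkn
    simp only [hp, Polynomial.coeff_sub, Polynomial.coeff_C_mul, Polynomial.coeff_X_pow,
      Polynomial.coeff_one]
    simp [hk0, hkn]
  have hset : ElemLoansRate x n =
      {α : Polynomial ℝ | ∃ c : ℝ, 0 < c ∧ α = c • p} := by
    ext α
    constructor
    · rintro ⟨h0, hn', hk, heq⟩
      refine ⟨-α.coeff 0, by linarith, ?_⟩
      ext k
      rcases eq_or_ne k 0 with rfl | hk0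
      · simp [hp0]
      rcases eq_or_ne k n with rfl | hkn
      · simp only [Polynomial.coeff_smul, hpn, smul_eq_mul]
        linarith
      · simp [hk k hk0 hkn, hpk k hk0 hkn]
    · rintro ⟨c, hc, rfl⟩
      refine ⟨?_, ?_, ?_, ?_⟩
      · simp only [Polynomial.coeff_smul, hp0, smul_eq_mul]; linarith
      · simp only [Polynomial.coeff_smul, hpn, smul_eq_mul]; positivity
      · intro k hk0 hkn
        simp [hpk k hk0 hkn]
      · simp only [Polynomial.coeff_smul, hp0, hpn, smul_eq_mul]; ring
  refine ⟨hset, ?_⟩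
  intro α hα hα0
  have hsub : ElemLoansRate x n ⊆ (Submodule.span ℝ {p} : Submodule ℝ (Polynomial ℝ)) := by
    intro β hβ
    rw [hset] at hβ
    obtain ⟨c, _, rfl⟩ := hβ
    exact Submodule.smul_mem _ _ (Submodule.mem_span_singleton_self p)
  have hα' : α ∈ Submodule.span ℝ ({p} : Set (Polynomial ℝ)) :=
    Submodule.span_le.mpr hsub hα
  obtain ⟨c, rfl⟩ := Submodule.mem_span_singleton.mp hα'
  have : c = 0 := by
    simpa [hp0] using hα0
  simp [this]
end

section
/- For x > 0, every element of S_x has a unique representation as Σ_{k=1}^n c_k·b_{j_k} with 1 ≤ j_1 < ... < j_n and all c_k > 0, where b_m = −1 + (1+mx)·y^m. -/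
/-- The elementary loan `-1 + (1+mx)·yᵐ` of maturity `m`, simple interest rate `x`. -/
noncomputable def elemLoan (x : ℝ) (m : ℕ) : Polynomial ℝ :=
  Polynomial.C (1 + m * x) * Polynomial.X ^ m - 1

/-- The convex cone generated by the elementary loans of simple interest rate `x`:
the set of conical combinations of the `elemLoan x m`, `m ≥ 1`. -/
noncomputable def Sx (x : ℝ) : Set (Polynomial ℝ) :=
  {α | ∃ (n : ℕ) (c : Fin n → ℝ) (m : Fin n → ℕ), 0 < n ∧ (∀ k, 0 < c k) ∧ (∀ k, 1 ≤ m k) ∧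
    α = ∑ k, c k • elemLoan x (m k)}

lemma coeff_sum_elem (x : ℝ) (c : ℕ →₀ ℝ)
    (j : ℕ) (hj : 1 ≤ j) :
    (c.sum fun k r => r • elemLoan x k).coeff j = c j * (1 + j * x) := by
  rw [Finsupp.sum, Polynomial.finset_sum_coeff]
  have hterm : ∀ k ∈ c.support, (c k • elemLoan x k).coeff j
      = c k * ((1 + k * x) * (if j = k then 1 else 0)) := by
    intro k _
    rw [Polynomial.coeff_smul, smul_eq_mul, elemLoan, Polynomial.coeff_sub,
      Polynomial.coeff_C_mul, Polynomial.coeff_X_pow, Polynomial.coeff_one,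
      if_neg (Nat.one_le_iff_ne_zero.mp hj), sub_zero]
  rw [Finset.sum_congr rfl hterm]
  by_cases hjs : j ∈ c.support
  · rw [Finset.sum_eq_single j]
    · simp [mul_comm]
    · intro k _ hkj
      rw [if_neg (Ne.symm hkj), mul_zero, mul_zero]
    · intro h; exact absurd hjs h
  · have hcj : c j = 0 := Finsupp.notMem_support_iff.mp hjs
    rw [hcj, zero_mul]
    apply Finset.sum_eq_zero
    intro k hk
    have hne : j ≠ k := fun h => hjs (h ▸ hk)
    rw [if_neg hne, mul_zero, mul_zero]

theorem sx_unique_repr (x : ℝ) (hx : 0 < x) (α : Polynomial ℝ) (hα : α ∈ Sx x) :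
    ∃! c : ℕ →₀ ℝ, (∀ k ∈ c.support, 0 < c k ∧ 1 ≤ k) ∧
      α = c.sum (fun k r => r • elemLoan x k) := by
  obtain ⟨n, cf, m, hn, hcpos, hm1, hαeq⟩ := hα
  set d : ℕ →₀ ℝ := ∑ k, Finsupp.single (m k) (cf k) with hd_def
  have hd : ∀ j, d j = ∑ k, if m k = j then cf k else 0 := by
    intro j
    simp [hd_def, Finsupp.finset_sum_apply, Finsupp.single_apply]
  have hdnn : ∀ j, 0 ≤ d j := by
    intro j
    rw [hd]
    apply Finset.sum_nonneg
    intro k _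
    split
    · exact le_of_lt (hcpos k)
    · exact le_refl 0
  have hsupp : ∀ k ∈ d.support, 0 < d k ∧ 1 ≤ k := by
    intro j hj
    have hne := Finsupp.mem_support_iff.mp hj
    refine ⟨lt_of_le_of_ne (hdnn j) (Ne.symm hne), ?_⟩
    have hex : ∃ k, m k = j := by
      by_contra h
      push_neg at h
      exact hne (by rw [hd]; exact Finset.sum_eq_zero fun k _ => if_neg (h k))
    obtain ⟨k, hk⟩ := hex
    exact hk ▸ hm1 k
  have hrepr : α = d.sum (fun k r => r • elemLoan x k) := by
    calc α = ∑ k, cf k • elemLoan x (m k) := hαeq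
    _ = ∑ k, Finsupp.linearCombination ℝ (elemLoan x) (Finsupp.single (m k) (cf k)) := by
        simp [Finsupp.linearCombination_single]
    _ = Finsupp.linearCombination ℝ (elemLoan x) d := (map_sum _ _ _).symm
    _ = d.sum (fun k r => r • elemLoan x k) := Finsupp.linearCombination_apply _ _
  refine ⟨d, ⟨hsupp, hrepr⟩, ?_⟩
  intro e ⟨hesupp, herepr⟩
  ext j
  rcases Nat.eq_zero_or_pos j with h0 | h1
  · subst h0
    have he0 : e 0 = 0 := by
      by_contra h
      exact absurd (hesupp 0 (Finsupp.mem_support_iff.mpr h)).2 (by norm_num)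
    have hd0 : d 0 = 0 := by
      by_contra h
      exact absurd (hsupp 0 (Finsupp.mem_support_iff.mpr h)).2 (by norm_num)
    rw [he0, hd0]
  · have h1' : 1 ≤ j := h1
    have hE := coeff_sum_elem x e j h1'
    have hD := coeff_sum_elem x d j h1'
    rw [← herepr] at hE
    rw [← hrepr] at hD
    have hpos : (0:ℝ) < 1 + j * x := by positivity
    have : e j * (1 + j * x) = d j * (1 + j * x) := by rw [← hE, ← hD]
    exact mul_right_cancel₀ hpos.ne' this
end

section
/- For x > 0, a loan α belongs to S_x if and only if −α(0) = Σ_{k≥1} α(k)/(1 + xk). -/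
/-- A loan: negative principal at time 0, nonnegative installments whose sum is at
least the principal. -/
def IsLoan (α : Polynomial ℝ) : Prop :=
  α.coeff 0 < 0 ∧ (∀ k ≥ 1, 0 ≤ α.coeff k) ∧
    -α.coeff 0 ≤ ∑ k ∈ Finset.Icc 1 α.natDegree, α.coeff k

/-!
Discounting a payment `a` due at time `k` to `a / (1 + x k)` defines a linear functional on
`ℝ[X]`, the present value. It vanishes on every elementary loan, hence on the cone `Sx x`.
Conversely every polynomial `p` equals the constant `presentValue x p` plus
`∑ₖ (pₖ / (1 + x k)) • elemLoan x k`, so a loan of present value zero is a positive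
combination of the elementary loans at its payment dates.
-/

open Polynomial

noncomputable def presentValue (x : ℝ) : ℝ[X] →ₗ[ℝ] ℝ :=
  lsum fun k => (1 + x * k)⁻¹ • LinearMap.id

section

variable {x : ℝ}

theorem presentValue_apply (p : ℝ[X]) :
    presentValue x p = p.coeff 0 + ∑ k ∈ Finset.Icc 1 p.natDegree, p.coeff k / (1 + x * k) := by
  rw [presentValue, lsum_apply, sum_over_range _ fun _ => map_zero _, Finset.range_eq_Ico,
    Finset.sum_eq_sum_Ico_succ_bot p.natDegree.succ_pos, Nat.succ_eq_add_one, zero_add,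
    Finset.Ico_add_one_right_eq_Icc]
  simp [div_eq_inv_mul]

theorem presentValue_monomial (n : ℕ) (a : ℝ) :
    presentValue x (monomial n a) = a / (1 + x * n) := by
  simp [presentValue, div_eq_inv_mul]

theorem elemLoan_zero : elemLoan x 0 = 0 := by
  simp [elemLoan]

theorem presentValue_elemLoan (hx : 0 ≤ x) (m : ℕ) : presentValue x (elemLoan x m) = 0 := by
  have : 1 + x * m ≠ 0 := by positivity
  rw [elemLoan, C_mul_X_pow_eq_monomial, map_sub, presentValue_monomial, ← C_1,
    ← monomial_zero_left, presentValue_monomial]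
  field_simp
  ring

theorem presentValue_eq_zero_of_mem_Sx (hx : 0 ≤ x) {p : ℝ[X]} (hp : p ∈ Sx x) :
    presentValue x p = 0 := by
  obtain ⟨n, c, m, -, -, -, rfl⟩ := hp
  simp [presentValue_elemLoan hx]

theorem eq_C_presentValue_add_sum_smul_elemLoan (hx : 0 ≤ x) (p : ℝ[X]) :
    p = C (presentValue x p) + p.sum fun k a => (a / (1 + x * k)) • elemLoan x k := by
  induction p using Polynomial.induction_on' with
  | add p q hp hq =>
    rw [map_add, C_add, sum_add_index _ _ _ (by simp) (by simp [add_div, add_smul])]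
    nth_rw 1 [hp, hq]
    ring
  | monomial n a =>
    have : a / (1 + x * n) * (1 + n * x) = a := by
      field_simp
    rw [presentValue_monomial, sum_monomial_index _ _ (by simp), elemLoan, smul_eq_C_mul,
      ← C_mul_X_pow_eq_monomial]
    nth_rw 1 [← this]
    rw [C_mul]
    ring

theorem sum_smul_elemLoan_mem_Sx {s : Finset ℕ} (hs : s.Nonempty) (hs₁ : ∀ k ∈ s, 1 ≤ k)
    {c : ℕ → ℝ} (hc : ∀ k ∈ s, 0 < c k) : ∑ k ∈ s, c k • elemLoan x k ∈ Sx x := by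
  refine ⟨s.card, fun i => c (s.equivFin.symm i), fun i => s.equivFin.symm i, hs.card_pos,
    fun i => hc _ (s.equivFin.symm i).2, fun i => hs₁ _ (s.equivFin.symm i).2, ?_⟩
  rw [← Finset.sum_coe_sort s]
  exact (s.equivFin.symm.sum_comp fun k : s => c k • elemLoan x k).symm

theorem mem_Sx_of_presentValue_eq_zero (hx : 0 ≤ x) {p : ℝ[X]} (hp : p ≠ 0)
    (hp₁ : ∀ k ≥ 1, 0 ≤ p.coeff k) (hpv : presentValue x p = 0) : p ∈ Sx x := by
  have hexp := eq_C_presentValue_add_sum_smul_elemLoan hx p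
  rw [hpv, C_0, zero_add, Polynomial.sum_def,
    ← Finset.sum_erase _ (by rw [elemLoan_zero, smul_zero])] at hexp
  rw [hexp]
  refine sum_smul_elemLoan_mem_Sx ?_ ?_ ?_
  · refine Finset.nonempty_iff_ne_empty.mpr fun h => hp ?_
    rw [hexp, h, Finset.sum_empty]
  · exact fun k hk => Nat.one_le_iff_ne_zero.mpr (Finset.ne_of_mem_erase hk)
  · intro k hk
    have hk₁ := Nat.one_le_iff_ne_zero.mpr (Finset.ne_of_mem_erase hk)
    have hk₀ := mem_support_iff.mp (Finset.mem_of_mem_erase hk)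
    exact div_pos ((hp₁ k hk₁).lt_of_ne hk₀.symm) (by positivity)

end

theorem mem_sx_iff (x : ℝ) (hx : 0 < x) (α : Polynomial ℝ) (hα : IsLoan α) :
    α ∈ Sx x ↔ -α.coeff 0 = ∑ k ∈ Finset.Icc 1 α.natDegree, α.coeff k / (1 + x * k) := by
  obtain ⟨h₀, h₁, -⟩ := hα
  rw [neg_eq_iff_add_eq_zero, ← presentValue_apply]
  refine ⟨presentValue_eq_zero_of_mem_Sx hx.le, mem_Sx_of_presentValue_eq_zero hx.le ?_ h₁⟩
  rintro rfl
  simp at h₀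
end

section
/- The sequence of critical rates is strictly decreasing: a_2 > a_3 > a_4 > ..., where a_n is the unique positive solution of 1 = x·Σ_{k=1}^n 1/(1+kx). -/
/-!
Write `f n x = x * ∑_{k=1}^n 1/(1+kx)`. Each summand `x/(1+kx)` is increasing in `x ≥ 0`, and
adding the positive term `x/(1+(n+1)x)` makes `f (n+1) x > f n x` for `x > 0`. So if `a ≤ b` then
`1 = f n a ≤ f n b < f (n+1) b = 1`.
-/

open Finset Set

noncomputable def criticalSum (n : ℕ) (x : ℝ) : ℝ :=
  x * ∑ k ∈ Icc 1 n, 1 / (1 + k * x)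

lemma monotoneOn_mul_one_div_one_add_mul {c : ℝ} (hc : 0 ≤ c) :
    MonotoneOn (fun x : ℝ => x * (1 / (1 + c * x))) (Ici 0) := by
  intro x hx y hy hxy
  have hcx : 0 < 1 + c * x := by nlinarith [mem_Ici.mp hx]
  have hcy : 0 < 1 + c * y := by nlinarith [mem_Ici.mp hy]
  simp only [mul_one_div]
  rw [div_le_div_iff₀ hcx hcy]
  linarith

lemma criticalSum_monotoneOn (n : ℕ) : MonotoneOn (criticalSum n) (Ici 0) := by
  intro x hx y hy hxy
  simp only [criticalSum, mul_sum]
  exact sum_le_sum fun k _ =>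
    monotoneOn_mul_one_div_one_add_mul k.cast_nonneg hx hy hxy

lemma criticalSum_succ (n : ℕ) (x : ℝ) :
    criticalSum (n + 1) x = criticalSum n x + x * (1 / (1 + (n + 1) * x)) := by
  rw [criticalSum, criticalSum, sum_Icc_succ_top (by omega), mul_add]
  push_cast
  rfl

lemma criticalSum_lt_succ (n : ℕ) {x : ℝ} (hx : 0 < x) :
    criticalSum n x < criticalSum (n + 1) x := by
  rw [criticalSum_succ]
  have : 0 < x * (1 / (1 + (n + 1) * x)) := by positivity
  linarith

theorem critical_rates_strictly_decreasing_general (n : ℕ) (a b : ℝ)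
    (ha : 0 < a) (hacrit : a * ∑ k ∈ Finset.Icc 1 n, 1 / (1 + k * a) = 1)
    (hb : 0 < b) (hbcrit : b * ∑ k ∈ Finset.Icc 1 (n + 1), 1 / (1 + k * b) = 1) :
    b < a := by
  have ha_one : criticalSum n a = 1 := hacrit
  have hb_one : criticalSum (n + 1) b = 1 := hbcrit
  by_contra! hab
  linarith [criticalSum_monotoneOn n ha.le hb.le hab, criticalSum_lt_succ n hb]

theorem critical_rates_strictly_decreasing (n : ℕ) (hn : 2 ≤ n) (a b : ℝ)
    (ha : 0 < a) (hacrit : a * ∑ k ∈ Finset.Icc 1 n, 1 / (1 + k * a) = 1)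
    (hb : 0 < b) (hbcrit : b * ∑ k ∈ Finset.Icc 1 (n + 1), 1 / (1 + k * b) = 1) :
    b < a :=
  critical_rates_strictly_decreasing_general n a b ha hacrit hb hbcrit
end

section
/- For x > 0 and n ≥ 2, let r(x,n) = (Σ_{k=1}^n 1/(1+xk))⁻¹ and define the payoff amount P(k) = (1 − Σ_{i=1}^k r(x,n)/(1+ix))·(1+kx). Then P(1) < 1 if and only if x < a_n, and P(1) > 1 if and only if x > a_n, where a_n is the unique positive root of 1 = x·Σ_{k=1}^n 1/(1+kx). -/
/-!
Since `P(1) = 1 + x - r(x,n)`, comparing `P(1)` with `1` amounts to comparing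
`x * ∑ 1/(1 + k x)` with `1`. This function of `x` is strictly increasing on `x > 0`,
being a sum of the increasing functions `x / (1 + k x) = 1 / (1/x + k)`, and it equals `1` at `a`.
-/

open Finset

lemma strictMonoOn_div_one_add_mul {k : ℝ} (hk : 0 ≤ k) :
    StrictMonoOn (fun t : ℝ => t / (1 + t * k)) (Set.Ioi 0) := by
  intro u hu v hv huv
  simp only [Set.mem_Ioi] at hu hv
  rw [div_lt_div_iff₀ (by positivity) (by positivity)]
  linarith

lemma strictMonoOn_mul_sum_one_div {s : Finset ℕ} (hs : s.Nonempty) :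
    StrictMonoOn (fun t : ℝ => t * ∑ k ∈ s, 1 / (1 + t * k)) (Set.Ioi 0) := by
  intro u hu v hv huv
  simp only [mul_sum, mul_one_div]
  exact sum_lt_sum_of_nonempty hs fun k _ =>
    strictMonoOn_div_one_add_mul k.cast_nonneg hu hv huv

lemma sum_one_div_one_add_mul_pos {s : Finset ℕ} (hs : s.Nonempty) {t : ℝ} (ht : 0 ≤ t) :
    0 < ∑ k ∈ s, 1 / (1 + t * k) :=
  sum_pos (fun k _ => by positivity) hs

lemma one_sub_inv_div_mul_eq {x S : ℝ} (hx : 1 + x ≠ 0) :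
    (1 - S⁻¹ / (1 + x)) * (1 + x) = 1 + x - S⁻¹ := by
  field_simp

lemma one_add_sub_inv_lt_one_iff {x S : ℝ} (hS : 0 < S) : 1 + x - S⁻¹ < 1 ↔ x * S < 1 := by
  rw [← lt_div_iff₀ hS, one_div]
  constructor <;> intro h <;> linarith

lemma one_lt_one_add_sub_inv_iff {x S : ℝ} (hS : 0 < S) : 1 < 1 + x - S⁻¹ ↔ 1 < x * S := by
  rw [← inv_lt_iff_one_lt_mul₀ hS]
  constructor <;> intro h <;> linarith

theorem first_payoff_vs_one_general (x : ℝ) (hx : 0 < x) (n : ℕ) (a : ℝ)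
    (ha : 0 < a) (hacrit : a * ∑ k ∈ Finset.Icc 1 n, 1 / (1 + k * a) = 1) :
    ((1 - (∑ k ∈ Finset.Icc 1 n, 1 / (1 + x * k))⁻¹ / (1 + x)) * (1 + x) < 1 ↔ x < a) ∧
    (1 < (1 - (∑ k ∈ Finset.Icc 1 n, 1 / (1 + x * k))⁻¹ / (1 + x)) * (1 + x) ↔ a < x) := by
  have hne : (Icc 1 n).Nonempty := nonempty_of_sum_ne_zero (right_ne_zero_of_mul_eq_one hacrit)
  have hfa : a * ∑ k ∈ Icc 1 n, 1 / (1 + a * k) = 1 := by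
    simpa only [mul_comm (a : ℝ)] using hacrit
  have hmono := strictMonoOn_mul_sum_one_div hne
  have hS := sum_one_div_one_add_mul_pos hne hx.le
  rw [one_sub_inv_div_mul_eq (by positivity), one_add_sub_inv_lt_one_iff hS,
    one_lt_one_add_sub_inv_iff hS]
  have hlt := hmono.lt_iff_lt hx ha
  have hgt := hmono.lt_iff_lt ha hx
  rw [hfa] at hlt hgt
  exact ⟨hlt, hgt⟩

theorem first_payoff_vs_one (x : ℝ) (hx : 0 < x) (n : ℕ) (hn : 2 ≤ n) (a : ℝ)
    (ha : 0 < a) (hacrit : a * ∑ k ∈ Finset.Icc 1 n, 1 / (1 + k * a) = 1) :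
    ((1 - (∑ k ∈ Finset.Icc 1 n, 1 / (1 + x * k))⁻¹ / (1 + x)) * (1 + x) < 1 ↔ x < a) ∧
    (1 < (1 - (∑ k ∈ Finset.Icc 1 n, 1 / (1 + x * k))⁻¹ / (1 + x)) * (1 + x) ↔ a < x) :=
  first_payoff_vs_one_general x hx n a ha hacrit
end

section
/- For x > 0, n ≥ 2, r = (Σ_{k=1}^n 1/(1+xk))⁻¹, and P(k) = (1 − Σ_{i=1}^k r/(1+ix))·(1+kx): if P(k) > P(k+1) for some k with k+2 ≤ n−1, then P(k+1) > P(k+2). Consequently, once the sequence of payoff amounts of the constant-installment loan starts decreasing, it continues to decrease. -/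
/-- The payoff amount at time `k` of the constant-installment loan with principal 1,
`n` installments, at simple interest rate `x`. -/
noncomputable def payoff (x : ℝ) (n k : ℕ) : ℝ :=
  (1 - ∑ i ∈ Finset.Icc 1 k, (∑ j ∈ Finset.Icc 1 n, 1 / (1 + x * j))⁻¹ / (1 + i * x)) *
    (1 + k * x)

/-!
Write `payoff k = Q k * (1 + k x)` with `Q k = 1 - ∑_{i ≤ k} r / (1 + i x)`. Since
`Q (k + 1) = Q k - r / (1 + (k + 1) x)`, the factor `1 + (k + 1) x` cancels and
`payoff k - payoff (k + 1) = r - x * Q k`. For `x > 0` the installment `r` is nonnegative, so `Q`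
is antitone and these differences increase with `k`: once positive, they stay positive.
-/

open Finset

/-- The constant installment `r`. -/
noncomputable def loanInstallment (x : ℝ) (n : ℕ) : ℝ :=
  (∑ j ∈ Icc 1 n, 1 / (1 + x * j))⁻¹

noncomputable def discountedBalance (x : ℝ) (n m : ℕ) : ℝ :=
  1 - ∑ i ∈ Icc 1 m, loanInstallment x n / (1 + i * x)

section

variable {x : ℝ} (n : ℕ)

theorem payoff_eq_discountedBalance_mul (m : ℕ) :
    payoff x n m = discountedBalance x n m * (1 + m * x) :=
  rfl

theorem loanInstallment_nonneg (hx : 0 ≤ x) : 0 ≤ loanInstallment x n :=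
  inv_nonneg.2 <| sum_nonneg fun j _ => by positivity

theorem discountedBalance_succ (m : ℕ) :
    discountedBalance x n (m + 1) =
      discountedBalance x n m - loanInstallment x n / (1 + ((m + 1 : ℕ) : ℝ) * x) := by
  rw [discountedBalance, discountedBalance, sum_Icc_succ_top (by omega)]
  ring

theorem discountedBalance_antitone (hx : 0 ≤ x) : Antitone (discountedBalance x n) :=
  antitone_nat_of_succ_le fun m => by
    rw [discountedBalance_succ]
    exact sub_le_self _ (div_nonneg (loanInstallment_nonneg n hx) (by positivity))

theorem payoff_sub_payoff_succ {m : ℕ} (hm : 1 + ((m + 1 : ℕ) : ℝ) * x ≠ 0) :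
    payoff x n m - payoff x n (m + 1) = loanInstallment x n - x * discountedBalance x n m := by
  rw [payoff_eq_discountedBalance_mul, payoff_eq_discountedBalance_mul, discountedBalance_succ,
    sub_mul, div_mul_cancel₀ _ hm]
  push_cast
  ring

end

theorem payoff_decreasing_propagates_general (x : ℝ) (hx : 0 < x) (n : ℕ)
    (k : ℕ)
    (h : payoff x n k > payoff x n (k + 1)) :
    payoff x n (k + 1) > payoff x n (k + 2) := by
  have hQ : x * discountedBalance x n (k + 1) ≤ x * discountedBalance x n k :=
    mul_le_mul_of_nonneg_left (discountedBalance_antitone n hx.le k.le_succ) hx.le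
  rw [gt_iff_lt, ← sub_pos] at h ⊢
  rw [payoff_sub_payoff_succ n (by positivity)] at h ⊢
  linarith

theorem payoff_decreasing_propagates (x : ℝ) (hx : 0 < x) (n : ℕ) (hn : 2 ≤ n)
    (k : ℕ) (hk1 : 1 ≤ k) (hk2 : k + 2 ≤ n - 1)
    (h : payoff x n k > payoff x n (k + 1)) :
    payoff x n (k + 1) > payoff x n (k + 2) :=
  payoff_decreasing_propagates_general x hx n k h
end
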